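/- Let ū_h ∈ U, ȳ_h ∈ Y, and w̄_h ∈ W be such that αū_h is a subgradient of the norm ‖·‖_X at B*w̄_h (variational discretization); set ρ_y := Aȳ_h − Bū_h ∈ W* and D := (ζ̂ − αū_h)(B*(ŵ − w̄_h)), where ζ̂ is any subgradient of ‖·‖_X at B*ŵ. Then (1/2)‖Cȳ_h − g^δ‖_G² − (1/2)‖Cȳ − g^δ‖_G² ≤ (1/α)D + ‖C(A⁻¹ρ_y)‖_G · ‖Cȳ_h − g^δ‖_G. -/

import Mathlib

open RealInnerProductSpace NormedSpace

/-!
Write `r = C ȳ_h - g^δ`. Convexity of `½‖·‖²` bounds the left-hand side by `⟪C (ȳ_h - ȳ), r⟫`.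
Since `A* ŵ = -C* r`, this pairing equals `-(A (ȳ_h - ȳ)) ŵ = -ρ_y ŵ + (ū - ū_h)(B* ŵ)`.
The first term is `⟪C A⁻¹ ρ_y, r⟫`, bounded by Cauchy–Schwarz; the second is at most `D / α`
because `α ū` lies in the unit ball of `X*` while `ζ̂` attains `‖B* ŵ‖` there and `α ū_h`
attains `‖B* w̄_h‖`.
-/

section NormSubgradient

variable {X : Type*} [NormedAddCommGroup X] [NormedSpace ℝ X]

def IsNormSubgradient (ζ : StrongDual ℝ X) (x₀ : X) : Prop :=
  ∀ x : X, ζ x - ζ x₀ ≤ ‖x‖ - ‖x₀‖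

namespace IsNormSubgradient

variable {ζ : StrongDual ℝ X} {x₀ : X}

theorem apply_self (h : IsNormSubgradient ζ x₀) : ζ x₀ = ‖x₀‖ := by
  have h₀ := h 0
  have h₂ := h ((2 : ℝ) • x₀)
  rw [map_zero, norm_zero] at h₀
  rw [map_smul, norm_smul, smul_eq_mul, Real.norm_ofNat] at h₂
  linarith

theorem apply_le_norm (h : IsNormSubgradient ζ x₀) (x : X) : ζ x ≤ ‖x‖ := by
  linarith [h x, h.apply_self]

end IsNormSubgradient

theorem sub_apply_le_inv_mul_subgradient_gap {α : ℝ} (hα : 0 < α) {u uₕ ζ : StrongDual ℝ X}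
    {x xₕ : X} (hu : ‖u‖ ≤ 1 / α) (huₕ : IsNormSubgradient (α • uₕ) xₕ)
    (hζ : IsNormSubgradient ζ x) :
    u x - uₕ x ≤ (1 / α) * (ζ - α • uₕ) (x - xₕ) := by
  have hαu : α * u x ≤ ‖x‖ :=
    calc α * u x ≤ α * (‖u‖ * ‖x‖) := by
          gcongr
          exact (Real.le_norm_self _).trans (u.le_opNorm x)
      _ ≤ α * (1 / α * ‖x‖) := by gcongr
      _ = ‖x‖ := by field_simp
  have hgap : α * u x - α * uₕ x ≤ (ζ - α • uₕ) (x - xₕ) := by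
    have hζx := hζ.apply_self
    have hζxₕ := hζ.apply_le_norm xₕ
    have huₕxₕ : α * uₕ xₕ = ‖xₕ‖ := huₕ.apply_self
    simp only [sub_apply, smul_apply, smul_eq_mul, map_sub]
    linarith
  calc u x - uₕ x = (1 / α) * (α * u x - α * uₕ x) := by field_simp
    _ ≤ (1 / α) * (ζ - α • uₕ) (x - xₕ) := by gcongr

end NormSubgradient

theorem half_sq_norm_sub_half_sq_norm_le_inner {G : Type*} [NormedAddCommGroup G]
    [InnerProductSpace ℝ G] (a b : G) : (1 / 2) * ‖a‖ ^ 2 - (1 / 2) * ‖b‖ ^ 2 ≤ ⟪a - b, a⟫ := by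
  have h := norm_sub_sq_real a b
  rw [inner_sub_left, real_inner_self_eq_norm_sq, real_inner_comm]
  nlinarith [sq_nonneg ‖a - b‖]

theorem stmt_12_general
    {X G Y W : Type*}
    [NormedAddCommGroup X] [NormedSpace ℝ X]
    [NormedAddCommGroup G] [InnerProductSpace ℝ G]
    [NormedAddCommGroup Y] [NormedSpace ℝ Y]
    [NormedAddCommGroup W] [NormedSpace ℝ W]
    (A : Y ≃L[ℝ] StrongDual ℝ W) (Astar : W ≃L[ℝ] StrongDual ℝ Y)
    (hAadj : ∀ (y : Y) (w : W), A y w = Astar w y)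
    (Bstar : W →L[ℝ] X) (B : StrongDual ℝ X →L[ℝ] StrongDual ℝ W)
    (hB : ∀ (u : StrongDual ℝ X) (w : W), B u w = u (Bstar w))
    (C : Y →L[ℝ] G) (Cstar : G →L[ℝ] StrongDual ℝ Y)
    (hCadj : ∀ (y : Y) (g : G), ⟪C y, g⟫ = Cstar g y)
    (gδ : G) (α : ℝ) (hα : 0 < α)
    (ubar : StrongDual ℝ X) (ybar : Y)
    (hubar : ‖ubar‖ ≤ 1/α) (hybar : ybar = A.symm (B ubar))
    (yh : Y) (what : W)
    (hwhat : what = Astar.symm (-(Cstar (C yh - gδ))))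
    (uh : StrongDual ℝ X) (wh : W)
    (hvar : ∀ x : X, (α • uh) x - (α • uh) (Bstar wh) ≤ ‖x‖ - ‖Bstar wh‖)
    (ζhat : StrongDual ℝ X)
    (hζhat : ∀ x : X, ζhat x - ζhat (Bstar what) ≤ ‖x‖ - ‖Bstar what‖) :
    (1/2) * ‖C yh - gδ‖^2 - (1/2) * ‖C ybar - gδ‖^2 ≤
      (1/α) * ((ζhat - α • uh) (Bstar (what - wh)))
      + ‖C (A.symm (A yh - B uh))‖ * ‖C yh - gδ‖ := by
  have hw : Astar what = -Cstar (C yh - gδ) := by rw [hwhat, Astar.apply_symm_apply]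
  have pairing (y : Y) : ⟪C y, C yh - gδ⟫ = -A y what := by
    rw [hCadj, hAadj, hw, neg_apply, neg_neg]
  calc (1/2) * ‖C yh - gδ‖^2 - (1/2) * ‖C ybar - gδ‖^2
      ≤ ⟪C (yh - ybar), C yh - gδ⟫ := by
        simpa only [map_sub, sub_sub_sub_cancel_right] using
          half_sq_norm_sub_half_sq_norm_le_inner (C yh - gδ) (C ybar - gδ)
    _ = ⟪C (A.symm (A yh - B uh)), C yh - gδ⟫ + (ubar (Bstar what) - uh (Bstar what)) := by
        rw [pairing, pairing, A.apply_symm_apply, hybar, map_sub, A.apply_symm_apply]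
        simp only [sub_apply, hB]
        ring
    _ ≤ ‖C (A.symm (A yh - B uh))‖ * ‖C yh - gδ‖
          + (1/α) * ((ζhat - α • uh) (Bstar (what - wh))) := by
        rw [map_sub Bstar]
        exact add_le_add (real_inner_le_norm _ _)
          (sub_apply_le_inv_mul_subgradient_gap hα hubar hvar hζhat)
    _ = _ := add_comm _ _

/-- A posteriori estimate of the discrepancy functional error for Ivanov
regularization under variational discretization. -/
theorem stmt_12
    {X G Y W : Type*}
    [NormedAddCommGroup X] [NormedSpace ℝ X] [CompleteSpace X]
    [NormedAddCommGroup G] [InnerProductSpace ℝ G] [CompleteSpace G]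
    [NormedAddCommGroup Y] [NormedSpace ℝ Y] [CompleteSpace Y]
    [NormedAddCommGroup W] [NormedSpace ℝ W] [CompleteSpace W]
    (A : Y ≃L[ℝ] StrongDual ℝ W) (Astar : W ≃L[ℝ] StrongDual ℝ Y)
    (hAadj : ∀ (y : Y) (w : W), A y w = Astar w y)
    (Bstar : W →L[ℝ] X) (B : StrongDual ℝ X →L[ℝ] StrongDual ℝ W)
    (hB : ∀ (u : StrongDual ℝ X) (w : W), B u w = u (Bstar w))
    (C : Y →L[ℝ] G) (Cstar : G →L[ℝ] StrongDual ℝ Y)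
    (hCadj : ∀ (y : Y) (g : G), ⟪C y, g⟫ = Cstar g y)
    (gδ : G) (α : ℝ) (hα : 0 < α)
    (ubar : StrongDual ℝ X) (ybar : Y)
    (hubar : ‖ubar‖ ≤ 1/α) (hybar : ybar = A.symm (B ubar))
    (hmin : ∀ u : StrongDual ℝ X, ‖u‖ ≤ 1/α →
      (1/2) * ‖C ybar - gδ‖^2 ≤ (1/2) * ‖C (A.symm (B u)) - gδ‖^2)
    (yh : Y) (what : W)
    (hwhat : what = Astar.symm (-(Cstar (C yh - gδ))))
    (uh : StrongDual ℝ X) (wh : W)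
    (hvar : ∀ x : X, (α • uh) x - (α • uh) (Bstar wh) ≤ ‖x‖ - ‖Bstar wh‖)
    (ζhat : StrongDual ℝ X)
    (hζhat : ∀ x : X, ζhat x - ζhat (Bstar what) ≤ ‖x‖ - ‖Bstar what‖) :
    (1/2) * ‖C yh - gδ‖^2 - (1/2) * ‖C ybar - gδ‖^2 ≤
      (1/α) * ((ζhat - α • uh) (Bstar (what - wh)))
      + ‖C (A.symm (A yh - B uh))‖ * ‖C yh - gδ‖ :=
  stmt_12_general A Astar hAadj Bstar B hB C Cstar hCadj gδ α hα ubar ybar hubar hybar yh what hwhat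
    uh wh hvar ζhat hζhat
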